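/- arXiv:2301.13632 — 5 statements merged into one kernel-verified Lean document; each statement's English description precedes it below -/
import Mathlib

section
/- For every integer m ≥ 3, the graph J_m has connectivity 4: every cut-set of J_m has at least 4 vertices, and there exists a cut-set of J_m with exactly 4 vertices. -/
/-- Vertex set of the graph `J m`: `A = Fin m` (the `a_i`), `B = Fin m` (the `b_i`),
`C = Fin (m-1)` (the `c_i`), all 0-indexed. -/
abbrev JVert (m : ℕ) := Fin m ⊕ Fin m ⊕ Fin (m - 1)

/-- The vertex `a_{i+1}` (0-indexed `i`). -/
def Ja {m : ℕ} (i : Fin m) : JVert m := Sum.inl i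
/-- The vertex `b_{i+1}` (0-indexed `i`). -/
def Jb {m : ℕ} (i : Fin m) : JVert m := Sum.inr (Sum.inl i)
/-- The vertex `c_{i+1}` (0-indexed `i`). -/
def Jc {m : ℕ} (i : Fin (m - 1)) : JVert m := Sum.inr (Sum.inr i)

/-- The graph `J m`: two `m`-cycles on `A` and on `B`; each `c_i` joined to
`a_i, a_{i+1}, b_i, b_{i+1}`; and the two extra edges `a_1 b_1` and `a_m b_m`. -/
def JGraph (m : ℕ) : SimpleGraph (JVert m) :=
  SimpleGraph.fromRel (fun x y =>
    match x, y with
    | Sum.inl i, Sum.inl j => (j : ℕ) = ((i : ℕ) + 1) % m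
    | Sum.inr (Sum.inl i), Sum.inr (Sum.inl j) => (j : ℕ) = ((i : ℕ) + 1) % m
    | Sum.inr (Sum.inr i), Sum.inl j => (j : ℕ) = (i : ℕ) ∨ (j : ℕ) = (i : ℕ) + 1
    | Sum.inr (Sum.inr i), Sum.inr (Sum.inl j) => (j : ℕ) = (i : ℕ) ∨ (j : ℕ) = (i : ℕ) + 1
    | Sum.inl i, Sum.inr (Sum.inl j) =>
        ((i : ℕ) = 0 ∧ (j : ℕ) = 0) ∨ ((i : ℕ) = m - 1 ∧ (j : ℕ) = m - 1)
    | _, _ => False)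

noncomputable instance {m : ℕ} : DecidableRel (JGraph m).Adj := Classical.decRel _

/-- `S` is a cut-set of `G`: the induced subgraph on the complement of `S`
has at least two vertices and is not connected. -/
def IsCutset {V : Type*} (G : SimpleGraph V) (S : Set V) : Prop :=
  Sᶜ.Nontrivial ∧ ¬ (G.induce Sᶜ).Connected

/-- `s` is an independent set in `G`. -/
def IsIndepSet {V : Type*} (G : SimpleGraph V) (s : Set V) : Prop :=
  s.Pairwise fun u v => ¬ G.Adj u v

namespace JTest

/-- `a` vertex with natural-number index taken mod `m`. -/
def fa {m : ℕ} (hm : 3 ≤ m) (t : ℕ) : JVert m := Ja ⟨t % m, Nat.mod_lt _ (by omega)⟩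
def fb {m : ℕ} (hm : 3 ≤ m) (t : ℕ) : JVert m := Jb ⟨t % m, Nat.mod_lt _ (by omega)⟩

variable {m : ℕ} (hm : 3 ≤ m)

include hm in
lemma mod_succ_ne (t : ℕ) : t % m ≠ (t+1) % m := by
  intro h
  rcases Nat.lt_or_ge (t % m + 1) m with h1 | h1
  · have : (t+1) % m = t % m + 1 := by
      rw [Nat.add_mod, Nat.mod_eq_of_lt (show 1 < m by omega), Nat.mod_eq_of_lt h1]
    omega
  · have hlt := Nat.mod_lt t (show 0 < m by omega)
    have h2 : t % m + 1 = m := by omega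
    have : (t+1) % m = 0 := by
      rw [Nat.add_mod, Nat.mod_eq_of_lt (show 1 < m by omega), h2, Nat.mod_self]
    omega

lemma adj_fa (t : ℕ) : (JGraph m).Adj (fa hm t) (fa hm (t+1)) := by
  rw [JGraph, SimpleGraph.fromRel_adj]
  constructor
  · simp only [fa, Ja, ne_eq, Sum.inl.injEq, Fin.mk.injEq]
    exact mod_succ_ne hm t
  · left
    show ((t+1) % m : ℕ) = (t % m + 1) % m
    conv_lhs => rw [Nat.add_mod, Nat.mod_eq_of_lt (show 1 < m by omega)]

lemma adj_fb (t : ℕ) : (JGraph m).Adj (fb hm t) (fb hm (t+1)) := by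
  rw [JGraph, SimpleGraph.fromRel_adj]
  constructor
  · simp only [fb, Jb, ne_eq, Sum.inr.injEq, Sum.inl.injEq, Fin.mk.injEq]
    exact mod_succ_ne hm t
  · left
    show ((t+1) % m : ℕ) = (t % m + 1) % m
    conv_lhs => rw [Nat.add_mod, Nat.mod_eq_of_lt (show 1 < m by omega)]

lemma adj_c_a (t : ℕ) (h : t < m - 1) :
    (JGraph m).Adj (Jc ⟨t, h⟩) (fa hm t) ∧ (JGraph m).Adj (Jc ⟨t, h⟩) (fa hm (t+1)) := by
  constructor <;> (rw [JGraph, SimpleGraph.fromRel_adj]; constructor)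
  · simp [Jc, fa, Ja]
  · left; left; show (t % m : ℕ) = t; exact Nat.mod_eq_of_lt (by omega)
  · simp [Jc, fa, Ja]
  · left; right; show ((t+1) % m : ℕ) = t + 1; exact Nat.mod_eq_of_lt (by omega)

lemma adj_c_b (t : ℕ) (h : t < m - 1) :
    (JGraph m).Adj (Jc ⟨t, h⟩) (fb hm t) ∧ (JGraph m).Adj (Jc ⟨t, h⟩) (fb hm (t+1)) := by
  constructor <;> (rw [JGraph, SimpleGraph.fromRel_adj]; constructor)
  · simp [Jc, fb, Jb]
  · left; left; show (t % m : ℕ) = t; exact Nat.mod_eq_of_lt (by omega)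
  · simp [Jc, fb, Jb]
  · left; right; show ((t+1) % m : ℕ) = t + 1; exact Nat.mod_eq_of_lt (by omega)

lemma adj_bridge0 : (JGraph m).Adj (fa hm 0) (fb hm 0) := by
  rw [JGraph, SimpleGraph.fromRel_adj]
  refine ⟨by simp [fa, fb, Ja, Jb], Or.inl (Or.inl ⟨?_, ?_⟩)⟩ <;>
    · show (0 % m : ℕ) = 0; simp

lemma adj_bridge1 : (JGraph m).Adj (fa hm (m-1)) (fb hm (m-1)) := by
  rw [JGraph, SimpleGraph.fromRel_adj]
  refine ⟨by simp [fa, fb, Ja, Jb], Or.inl (Or.inr ⟨?_, ?_⟩)⟩ <;>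
    · show ((m-1) % m : ℕ) = m - 1; exact Nat.mod_eq_of_lt (by omega)

lemma fa_add_m (t : ℕ) : fa hm (m + t) = fa hm t := by
  simp [fa, Nat.add_mod_left]

lemma fa_eq (i : Fin m) : fa hm i.val = Ja i := by
  simp [fa, Nat.mod_eq_of_lt i.isLt]

lemma fb_eq (i : Fin m) : fb hm i.val = Jb i := by
  simp [fb, Nat.mod_eq_of_lt i.isLt]


variable (S : Finset (JVert m))

/-- reachability inside the induced graph on the complement of `S`. -/
def R (S : Finset (JVert m)) (u v : JVert m) : Prop :=
  ∃ (hu : u ∈ (↑S : Set (JVert m))ᶜ) (hv : v ∈ (↑S : Set (JVert m))ᶜ),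
    ((JGraph m).induce (↑S : Set (JVert m))ᶜ).Reachable ⟨u, hu⟩ ⟨v, hv⟩

lemma R_refl {u : JVert m} (hu : u ∉ S) : R S u u :=
  ⟨by simpa using hu, by simpa using hu, SimpleGraph.Reachable.refl _⟩

lemma R_symm {u v : JVert m} (h : R S u v) : R S v u := by
  obtain ⟨hu, hv, r⟩ := h; exact ⟨hv, hu, r.symm⟩

lemma R_trans {u v w : JVert m} (h1 : R S u v) (h2 : R S v w) : R S u w := by
  obtain ⟨hu, hv, r1⟩ := h1; obtain ⟨hv', hw, r2⟩ := h2
  exact ⟨hu, hw, r1.trans r2⟩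

lemma R_adj {u v : JVert m} (hu : u ∉ S) (hv : v ∉ S) (h : (JGraph m).Adj u v) :
    R S u v := by
  refine ⟨by simpa using hu, by simpa using hv, SimpleGraph.Adj.reachable ?_⟩
  simpa [SimpleGraph.comap_adj] using h

lemma chainR (f : ℕ → JVert m) (i j : ℕ) (hij : i ≤ j)
    (hadj : ∀ t, i ≤ t → t < j → (JGraph m).Adj (f t) (f (t+1)))
    (halive : ∀ t, i ≤ t → t ≤ j → f t ∉ S) : R S (f i) (f j) := by
  induction j, hij using Nat.le_induction with
  | base => exact R_refl S (halive i le_rfl le_rfl)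
  | succ j hij ih =>
    refine R_trans S (ih (fun t h1 h2 => hadj t h1 (by omega))
      (fun t h1 h2 => halive t h1 (by omega))) ?_
    exact R_adj S (halive j hij (by omega)) (halive (j+1) (by omega) le_rfl)
      (hadj j hij (by omega))


lemma four_le_card {α : Type*} [DecidableEq α] {T : Finset α} {a b c d : α}
    (ha : a ∈ T) (hb : b ∈ T) (hc : c ∈ T) (hd : d ∈ T)
    (hab : a ≠ b) (hac : a ≠ c) (had : a ≠ d) (hbc : b ≠ c) (hbd : b ≠ d) (hcd : c ≠ d) :
    4 ≤ T.card := by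
  have hsub : ({a, b, c, d} : Finset α) ⊆ T := by
    intro x hx
    simp only [Finset.mem_insert, Finset.mem_singleton] at hx
    rcases hx with rfl | rfl | rfl | rfl <;> assumption
  have h4 : ({a, b, c, d} : Finset α).card = 4 := by
    rw [Finset.card_insert_of_notMem (by simp [hab, hac, had]),
        Finset.card_insert_of_notMem (by simp [hbc, hbd]),
        Finset.card_insert_of_notMem (by simp [hcd]), Finset.card_singleton]
  calc 4 = ({a, b, c, d} : Finset α).card := h4.symm
    _ ≤ T.card := Finset.card_le_card hsub

/-- dead `a`'s, as nat indices. -/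
lemma haS_nat (haS : ∀ k k' : Fin m, Ja k ∈ S → Ja k' ∈ S → k = k')
    {s t : ℕ} (hs : s < m) (ht : t < m) (h1 : fa hm s ∈ S) (h2 : fa hm t ∈ S) : s = t := by
  have := haS _ _ h1 h2
  simp only [Fin.mk.injEq, Nat.mod_eq_of_lt hs, Nat.mod_eq_of_lt ht] at this
  exact this

lemma RaLem_le (haS : ∀ k k' : Fin m, Ja k ∈ S → Ja k' ∈ S → k = k')
    (i j : ℕ) (hij : i ≤ j) (hjm : j < m) (hi : fa hm i ∉ S) (hj : fa hm j ∉ S) :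
    R S (fa hm i) (fa hm j) := by
  by_cases hdirect : ∀ t, i ≤ t → t ≤ j → fa hm t ∉ S
  · exact chainR S (fa hm) i j hij (fun t _ _ => adj_fa hm t) hdirect
  · push_neg at hdirect
    obtain ⟨t0, ht0i, ht0j, ht0dead⟩ := hdirect
    have hne_i : t0 ≠ i := fun h => hi (h ▸ ht0dead)
    have hne_j : t0 ≠ j := fun h => hj (h ▸ ht0dead)
    have hi_lt : i < t0 := by omega
    have hj_gt : t0 < j := by omega
    have halive : ∀ t, j ≤ t → t ≤ m + i → fa hm t ∉ S := by
      intro t ht1 ht2 hdead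
      have hfix : fa hm (t % m) = fa hm t := by simp [fa, Nat.mod_mod_of_dvd _ dvd_rfl]
      have htm : t % m = t0 :=
        haS_nat hm S haS (Nat.mod_lt _ (by omega)) (by omega) (hfix ▸ hdead) ht0dead
      rcases Nat.lt_or_ge t m with h | h
      · rw [Nat.mod_eq_of_lt h] at htm; omega
      · have h2m : t < 2 * m := by omega
        have : t % m = t - m := by
          rw [Nat.mod_eq_sub_mod h, Nat.mod_eq_of_lt (by omega)]
        omega
    have big := chainR S (fa hm) j (m + i) (by omega) (fun t _ _ => adj_fa hm t) halive
    rw [fa_add_m hm i] at big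
    exact R_symm S big

lemma RaLem (haS : ∀ k k' : Fin m, Ja k ∈ S → Ja k' ∈ S → k = k')
    (i j : ℕ) (him : i < m) (hjm : j < m) (hi : fa hm i ∉ S) (hj : fa hm j ∉ S) :
    R S (fa hm i) (fa hm j) := by
  rcases le_total i j with h | h
  · exact RaLem_le hm S haS i j h hjm hi hj
  · exact R_symm S (RaLem_le hm S haS j i h him hj hi)

lemma RcA (haS : ∀ k k' : Fin m, Ja k ∈ S → Ja k' ∈ S → k = k')
    (t : ℕ) (h : t < m - 1) (hc : Jc ⟨t, h⟩ ∉ S) :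
    ∃ i, i < m ∧ fa hm i ∉ S ∧ R S (Jc ⟨t, h⟩) (fa hm i) := by
  by_cases ht : fa hm t ∉ S
  · exact ⟨t, by omega, ht, R_adj S hc ht (adj_c_a hm t h).1⟩
  · rw [not_not] at ht
    have ht1 : fa hm (t+1) ∉ S := by
      intro hdead
      have := haS_nat hm S haS (show t < m by omega) (by omega) ht hdead
      omega
    exact ⟨t+1, by omega, ht1, R_adj S hc ht1 (adj_c_a hm t h).2⟩


lemma fa_ne_fa {s t : ℕ} (hs : s < m) (ht : t < m) (hst : s ≠ t) : fa hm s ≠ fa hm t := by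
  simp only [fa, Ja, ne_eq, Sum.inl.injEq, Fin.mk.injEq,
    Nat.mod_eq_of_lt hs, Nat.mod_eq_of_lt ht]
  exact hst

lemma fb_ne_fb {s t : ℕ} (hs : s < m) (ht : t < m) (hst : s ≠ t) : fb hm s ≠ fb hm t := by
  simp only [fb, Jb, ne_eq, Sum.inr.injEq, Sum.inl.injEq, Fin.mk.injEq,
    Nat.mod_eq_of_lt hs, Nat.mod_eq_of_lt ht]
  exact hst

lemma fa_ne_fb (s t : ℕ) : fa hm s ≠ fb hm t := by simp [fa, fb, Ja, Jb]
lemma fa_ne_Jc (s : ℕ) (q : Fin (m-1)) : fa hm s ≠ Jc q := by simp [fa, Ja, Jc]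
lemma fb_ne_Jc (s : ℕ) (q : Fin (m-1)) : fb hm s ≠ Jc q := by simp [fb, Jb, Jc]
lemma Jc_ne {p q : Fin (m-1)} (h : p ≠ q) : Jc p ≠ Jc q := by
  simp only [Jc, ne_eq, Sum.inr.injEq]; exact h

lemma fb_mem_iff {t : ℕ} (ht : t < m) : fb hm t ∈ S ↔ Jb ⟨t, ht⟩ ∈ S := by
  rw [show fb hm t = Jb ⟨t, ht⟩ from by simp [fb, Nat.mod_eq_of_lt ht]]

lemma RbA (hcard : S.card ≤ 3) (haS : ∀ k k' : Fin m, Ja k ∈ S → Ja k' ∈ S → k = k')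
    (j : ℕ) (hj : j < m) (hbj : fb hm j ∉ S) :
    ∃ i, i < m ∧ fa hm i ∉ S ∧ R S (fb hm j) (fa hm i) := by
  have hm0 : 0 < m := by omega
  by_cases hc2 : ∃ (p q : Fin (m-1)), Jc p ∈ S ∧ Jc q ∈ S ∧ p ≠ q
  · -- at least two dead c's
    obtain ⟨p, q, hp, hq, hpq⟩ := hc2
    by_cases hbdead : ∃ l : Fin m, Jb l ∈ S
    · obtain ⟨l, hl⟩ := hbdead
      have hNoA : ∀ s : ℕ, s < m → fa hm s ∉ S := by
        intro s hs hk
        have := four_le_card hp hq hl hk (Jc_ne hpq)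
          (Ne.symm (by simpa [fb_eq] using fb_ne_Jc hm (l : ℕ) p))
          (Ne.symm (fa_ne_Jc hm s p))
          (Ne.symm (by simpa [fb_eq] using fb_ne_Jc hm (l : ℕ) q))
          (Ne.symm (fa_ne_Jc hm s q))
          (by simpa [fb_eq] using (fa_ne_fb hm s (l : ℕ)).symm)
        omega
      have hbSub : ∀ t : ℕ, t < m → fb hm t ∈ S → t = (l : ℕ) := by
        intro t ht hdead
        by_contra hne
        have := four_le_card hp hq hl hdead (Jc_ne hpq)
          (Ne.symm (by simpa [fb_eq] using fb_ne_Jc hm (l : ℕ) p))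
          (Ne.symm (fb_ne_Jc hm t p))
          (Ne.symm (by simpa [fb_eq] using fb_ne_Jc hm (l : ℕ) q))
          (Ne.symm (fb_ne_Jc hm t q))
          (by simpa [fb_eq] using (fb_ne_fb hm ht l.isLt hne).symm)
        omega
      have hlj : (l : ℕ) ≠ j := by
        intro h
        exact hbj (by rw [← h, fb_eq hm l]; exact hl)
      rcases Nat.lt_or_ge j (l : ℕ) with hjl | hlj'
      · -- j < l : go down to b_0, bridge at 0
        have halive : ∀ t, 0 ≤ t → t ≤ j → fb hm t ∉ S := by
          intro t _ ht hdead
          have := hbSub t (by omega) hdead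
          omega
        have ha0 : fa hm 0 ∉ S := hNoA 0 hm0
        refine ⟨0, hm0, ha0, R_trans S (R_symm S
          (chainR S (fb hm) 0 j (by omega) (fun t _ _ => adj_fb hm t) halive)) ?_⟩
        exact R_adj S (halive 0 le_rfl (by omega)) ha0 (adj_bridge0 hm).symm
      · -- l < j : go up to b_{m-1}, bridge at m-1
        have hlj2 : (l : ℕ) < j := by omega
        have halive : ∀ t, j ≤ t → t ≤ m - 1 → fb hm t ∉ S := by
          intro t ht1 ht2 hdead
          have := hbSub t (by omega) hdead
          omega
        have ham1 : fa hm (m-1) ∉ S := hNoA (m-1) (by omega)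
        refine ⟨m-1, by omega, ham1, R_trans S
          (chainR S (fb hm) j (m-1) (by omega) (fun t _ _ => adj_fb hm t) halive) ?_⟩
        exact R_adj S (halive (m-1) (by omega) le_rfl) ham1 (adj_bridge1 hm).symm
    · -- no dead b at all
      push_neg at hbdead
      have hbAll : ∀ t : ℕ, t < m → fb hm t ∉ S := by
        intro t ht hdead
        exact hbdead ⟨t, ht⟩ ((fb_mem_iff hm S ht).mp hdead)
      by_cases ha0 : fa hm 0 ∈ S
      · have ham1 : fa hm (m-1) ∉ S := by
          intro h
          have := haS_nat hm S haS (show 0 < m by omega) (show m - 1 < m by omega) ha0 h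
          omega
        refine ⟨m-1, by omega, ham1, R_trans S
          (chainR S (fb hm) j (m-1) (by omega) (fun t _ _ => adj_fb hm t)
            (fun t _ h2 => hbAll t (by omega))) ?_⟩
        exact R_adj S (hbAll (m-1) (by omega)) ham1 (adj_bridge1 hm).symm
      · refine ⟨0, hm0, ha0, R_trans S (R_symm S
          (chainR S (fb hm) 0 j (by omega) (fun t _ _ => adj_fb hm t)
            (fun t _ h2 => hbAll t (by omega)))) ?_⟩
        exact R_adj S (hbAll 0 hm0) ha0 (adj_bridge0 hm).symm
  · -- at most one dead c
    push_neg at hc2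
    have hcs : ∀ (p q : Fin (m-1)), Jc p ∈ S → Jc q ∈ S → p = q := by
      intro p q hp hq
      by_contra hne
      exact hne (hc2 p q hp hq)
    by_cases hj0 : j = 0
    · subst hj0
      by_cases ha0 : fa hm 0 ∈ S
      · by_cases hc0 : Jc ⟨0, by omega⟩ ∈ S
        · -- a_0 and c_0 dead
          by_cases hbm1 : fb hm (m-1) ∈ S
          · -- b_{m-1} also dead; use b_1 and c_1
            have hb1 : fb hm 1 ∉ S := by
              intro h
              have := four_le_card ha0 hc0 hbm1 h
                (fa_ne_Jc hm 0 _) (fa_ne_fb hm 0 (m-1)) (fa_ne_fb hm 0 1)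
                (Ne.symm (fb_ne_Jc hm (m-1) _)) (Ne.symm (fb_ne_Jc hm 1 _))
                (fb_ne_fb hm (by omega) (by omega) (by omega))
              omega
            have hc1 : Jc ⟨1, by omega⟩ ∉ S := by
              intro h
              have := hcs _ _ h hc0
              simp [Fin.mk.injEq] at this
            obtain ⟨i, him, hia, rc⟩ := RcA hm S haS 1 (by omega) hc1
            refine ⟨i, him, hia, R_trans S (R_adj S hbj hb1 ?_) (R_trans S
              (R_adj S hb1 hc1 ((adj_c_b hm 1 (by omega)).1).symm) rc)⟩
            exact (by simpa using adj_fb hm 0)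
          · -- b_{m-1} alive: go there, bridge at m-1
            have ham1 : fa hm (m-1) ∉ S := by
              intro h
              have := haS_nat hm S haS (show 0 < m by omega) (show m-1 < m by omega) ha0 h
              omega
            have hadj : (JGraph m).Adj (fb hm 0) (fb hm (m-1)) := by
              have h1 := adj_fb hm (m-1)
              have e : fb hm (m-1+1) = fb hm 0 := by
                simp [fb, show (m-1+1) = m by omega, Nat.mod_self]
              rw [e] at h1
              exact h1.symm
            exact ⟨m-1, by omega, ham1, R_trans S (R_adj S hbj hbm1 hadj)
              (R_adj S hbm1 ham1 (adj_bridge1 hm).symm)⟩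
        · -- c_0 alive
          obtain ⟨i, him, hia, rc⟩ := RcA hm S haS 0 (by omega) hc0
          exact ⟨i, him, hia, R_trans S
            (R_adj S hbj hc0 ((adj_c_b hm 0 (by omega)).1).symm) rc⟩
      · exact ⟨0, hm0, ha0, R_adj S hbj ha0 (adj_bridge0 hm).symm⟩
    · by_cases hjm1 : j = m - 1
      · subst hjm1
        by_cases ham1 : fa hm (m-1) ∈ S
        · by_cases hcm2 : Jc ⟨m-2, by omega⟩ ∈ S
          · by_cases hb0 : fb hm 0 ∈ S
            · -- b_0 dead too; use b_{m-2} and c_{m-3}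
              have hbm2 : fb hm (m-2) ∉ S := by
                intro h
                have := four_le_card ham1 hcm2 hb0 h
                  (fa_ne_Jc hm (m-1) _) (fa_ne_fb hm (m-1) 0) (fa_ne_fb hm (m-1) (m-2))
                  (Ne.symm (fb_ne_Jc hm 0 _)) (Ne.symm (fb_ne_Jc hm (m-2) _))
                  (fb_ne_fb hm (by omega) (by omega) (by omega))
                omega
              have hcm3 : Jc ⟨m-3, by omega⟩ ∉ S := by
                intro h
                have := hcs _ _ h hcm2
                simp only [Fin.mk.injEq] at this
                omega
              obtain ⟨i, him, hia, rc⟩ := RcA hm S haS (m-3) (by omega) hcm3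
              have hadj1 : (JGraph m).Adj (fb hm (m-1)) (fb hm (m-2)) := by
                have h1 := adj_fb hm (m-2)
                rw [show m-2+1 = m-1 by omega] at h1
                exact h1.symm
              have hadj2 : (JGraph m).Adj (fb hm (m-2)) (Jc ⟨m-3, by omega⟩) := by
                have h1 := (adj_c_b hm (m-3) (by omega)).2
                rw [show m-3+1 = m-2 by omega] at h1
                exact h1.symm
              exact ⟨i, him, hia, R_trans S (R_adj S hbj hbm2 hadj1)
                (R_trans S (R_adj S hbm2 hcm3 hadj2) rc)⟩
            · -- b_0 alive: go there, bridge at 0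
              have ha0 : fa hm 0 ∉ S := by
                intro h
                have := haS_nat hm S haS (show 0 < m by omega) (show m-1 < m by omega) h ham1
                omega
              have hadj : (JGraph m).Adj (fb hm (m-1)) (fb hm 0) := by
                have h1 := adj_fb hm (m-1)
                have e : fb hm (m-1+1) = fb hm 0 := by
                  simp [fb, show (m-1+1) = m by omega, Nat.mod_self]
                rw [e] at h1
                exact h1
              exact ⟨0, hm0, ha0, R_trans S (R_adj S hbj hb0 hadj)
                (R_adj S hb0 ha0 (adj_bridge0 hm).symm)⟩
          · -- c_{m-2} alive
            obtain ⟨i, him, hia, rc⟩ := RcA hm S haS (m-2) (by omega) hcm2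
            have hadj : (JGraph m).Adj (fb hm (m-1)) (Jc ⟨m-2, by omega⟩) := by
              have h1 := (adj_c_b hm (m-2) (by omega)).2
              rw [show m-2+1 = m-1 by omega] at h1
              exact h1.symm
            exact ⟨i, him, hia, R_trans S (R_adj S hbj hcm2 hadj) rc⟩
        · exact ⟨m-1, by omega, ham1, R_adj S hbj ham1 (adj_bridge1 hm).symm⟩
      · -- interior j
        have hjr : 1 ≤ j ∧ j < m - 1 := by omega
        by_cases hcj : Jc ⟨j, by omega⟩ ∈ S
        · have hcj1 : Jc ⟨j-1, by omega⟩ ∉ S := by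
            intro h
            have := hcs _ _ h hcj
            simp only [Fin.mk.injEq] at this
            omega
          obtain ⟨i, him, hia, rc⟩ := RcA hm S haS (j-1) (by omega) hcj1
          have hadj : (JGraph m).Adj (fb hm j) (Jc ⟨j-1, by omega⟩) := by
            have h1 := (adj_c_b hm (j-1) (by omega)).2
            rw [show j-1+1 = j by omega] at h1
            exact h1.symm
          exact ⟨i, him, hia, R_trans S (R_adj S hbj hcj1 hadj) rc⟩
        · obtain ⟨i, him, hia, rc⟩ := RcA hm S haS j (by omega) hcj
          exact ⟨i, him, hia, R_trans S
            (R_adj S hbj hcj ((adj_c_b hm j (by omega)).1).symm) rc⟩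


lemma toA (hcard : S.card ≤ 3) (haS : ∀ k k' : Fin m, Ja k ∈ S → Ja k' ∈ S → k = k')
    (u : JVert m) (hu : u ∉ S) :
    ∃ i, i < m ∧ fa hm i ∉ S ∧ R S u (fa hm i) := by
  rcases u with k | k | k
  · refine ⟨(k : ℕ), k.isLt, ?_, ?_⟩
    · rw [fa_eq hm k]; exact hu
    · rw [fa_eq hm k]; exact R_refl S hu
  · have hu' : fb hm (k : ℕ) ∉ S := by rw [fb_eq hm k]; exact hu
    obtain ⟨i, him, hia, r⟩ := RbA hm S hcard haS (k : ℕ) k.isLt hu'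
    rw [fb_eq hm k] at r
    exact ⟨i, him, hia, r⟩
  · have hu' : Jc ⟨(k : ℕ), k.isLt⟩ ∉ S := hu
    obtain ⟨i, him, hia, r⟩ := RcA hm S haS (k : ℕ) k.isLt hu'
    exact ⟨i, him, hia, r⟩

include hm in
lemma mainA (hcard : S.card ≤ 3) (haS : ∀ k k' : Fin m, Ja k ∈ S → Ja k' ∈ S → k = k')
    (u v : JVert m) (hu : u ∉ S) (hv : v ∉ S) : R S u v := by
  obtain ⟨i, him, hia, ru⟩ := toA hm S hcard haS u hu
  obtain ⟨i', him', hia', rv⟩ := toA hm S hcard haS v hv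
  exact R_trans S ru (R_trans S (RaLem hm S haS i i' him him' hia hia') (R_symm S rv))

/-- the swap automorphism exchanging the two cycles -/
def swp {m : ℕ} : JVert m → JVert m := fun x =>
  match x with
  | Sum.inl i => Sum.inr (Sum.inl i)
  | Sum.inr (Sum.inl i) => Sum.inl i
  | Sum.inr (Sum.inr i) => Sum.inr (Sum.inr i)

lemma swp_invol (x : JVert m) : swp (swp x) = x := by
  rcases x with i | i | i <;> rfl

lemma swp_adj (x y : JVert m) : (JGraph m).Adj (swp x) (swp y) ↔ (JGraph m).Adj x y := by
  rcases x with i | i | i <;> rcases y with j | j | j <;>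
    simp only [JGraph, SimpleGraph.fromRel_adj, swp, ne_eq, Sum.inl.injEq, Sum.inr.injEq,
      Sum.inl_ne_inr, Sum.inr_ne_inl, not_false_eq_true, true_and, false_or, or_false] <;>
    tauto

lemma R_map (S S' : Finset (JVert m)) (hmem : ∀ x : JVert m, x ∈ S' ↔ swp x ∈ S)
    {u v : JVert m} (h : R S' u v) : R S (swp u) (swp v) := by
  obtain ⟨hu, hv, r⟩ := h
  have hmem' : ∀ x : JVert m, x ∈ (↑S' : Set (JVert m))ᶜ → swp x ∈ (↑S : Set (JVert m))ᶜ := by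
    intro x hx
    simp only [Set.mem_compl_iff, Finset.mem_coe] at hx ⊢
    exact fun hc => hx ((hmem x).mpr hc)
  let φ : ((JGraph m).induce (↑S' : Set (JVert m))ᶜ) →g
      ((JGraph m).induce (↑S : Set (JVert m))ᶜ) :=
    ⟨fun x => ⟨swp x.val, hmem' x.val x.property⟩, by
      intro a b hab
      simp only [SimpleGraph.comap_adj, Function.Embedding.coe_subtype] at hab ⊢
      exact (swp_adj _ _).mpr hab⟩
  exact ⟨hmem' u hu, hmem' v hv, r.map φ⟩

include hm in
lemma mainR (hcard : S.card ≤ 3) (u v : JVert m) (hu : u ∉ S) (hv : v ∉ S) : R S u v := by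
  by_cases haS : ∀ k k' : Fin m, Ja k ∈ S → Ja k' ∈ S → k = k'
  · exact mainA hm S hcard haS u v hu hv
  · push_neg at haS
    obtain ⟨k, k', hk, hk', hne⟩ := haS
    have hbS : ∀ l l' : Fin m, Jb l ∈ S → Jb l' ∈ S → l = l' := by
      intro l l' hl hl'
      by_contra hne2
      have := four_le_card hk hk' hl hl'
        (by simp [Ja, hne]) (by simp [Ja, Jb]) (by simp [Ja, Jb])
        (by simp [Ja, Jb]) (by simp [Ja, Jb]) (by simp [Jb, hne2])
      omega
    set S' : Finset (JVert m) := S.image swp with hS'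
    have hswpinj : Function.Injective (swp : JVert m → JVert m) :=
      Function.LeftInverse.injective swp_invol
    have hmem : ∀ x : JVert m, x ∈ S' ↔ swp x ∈ S := by
      intro x
      rw [hS', Finset.mem_image]
      constructor
      · rintro ⟨a, ha, rfl⟩; rwa [swp_invol]
      · intro hx; exact ⟨swp x, hx, swp_invol x⟩
    have hcard' : S'.card ≤ 3 := by
      rw [hS', Finset.card_image_of_injective _ hswpinj]; exact hcard
    have haS' : ∀ p p' : Fin m, Ja p ∈ S' → Ja p' ∈ S' → p = p' := by
      intro p p' hp hp'
      rw [hmem] at hp hp'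
      exact hbS p p' hp hp'
    have hu' : swp u ∉ S' := by
      rw [hmem, swp_invol]; exact hu
    have hv' : swp v ∉ S' := by
      rw [hmem, swp_invol]; exact hv
    have hr := mainA hm S' hcard' haS' (swp u) (swp v) hu' hv'
    have hr2 := R_map S S' hmem hr
    rw [swp_invol u, swp_invol v] at hr2
    exact hr2


lemma nbrJa1 (w : JVert m) (h : (JGraph m).Adj (Ja ⟨1, by omega⟩) w) :
    w = Ja ⟨0, by omega⟩ ∨ w = Ja ⟨2, by omega⟩ ∨
      w = Jc ⟨0, by omega⟩ ∨ w = Jc ⟨1, by omega⟩ := by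
  rcases w with k | k | k
  · rw [JGraph, SimpleGraph.fromRel_adj] at h
    simp only [Ja, ne_eq, Sum.inl.injEq, Fin.mk.injEq] at h ⊢
    obtain ⟨hne, hrel | hrel⟩ := h
    · right
      have h2 : (1+1) % m = 2 := Nat.mod_eq_of_lt (by omega)
      rw [h2] at hrel
      exact Or.inl (Fin.ext hrel)
    · left
      by_cases hc : (k : ℕ) + 1 = m
      · rw [hc, Nat.mod_self] at hrel; omega
      · rw [Nat.mod_eq_of_lt (by have := k.isLt; omega)] at hrel
        exact Fin.ext (show (k : ℕ) = 0 by omega)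
  · exfalso
    rw [JGraph, SimpleGraph.fromRel_adj] at h
    simp only [Ja, Jb] at h
    obtain ⟨hne, hrel | hrel⟩ := h
    · rcases hrel with ⟨h1, _⟩ | ⟨h1, _⟩ <;> omega
    · exact hrel
  · rw [JGraph, SimpleGraph.fromRel_adj] at h
    simp only [Ja, Jc, Sum.inr.injEq] at h ⊢
    obtain ⟨hne, hrel | hrel⟩ := h
    · exact absurd hrel id
    · rcases hrel with h1 | h1
      · right; right; right
        exact Fin.ext (show (k : ℕ) = 1 by omega)
      · right; right; left
        exact Fin.ext (show (k : ℕ) = 0 by omega)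

end JTest

/-- For every integer `m ≥ 3`, the graph `J_m` has connectivity 4:
every cut-set has at least 4 vertices, and some cut-set has exactly 4 vertices. -/
theorem stmt_2 (m : ℕ) (hm : 3 ≤ m) :
    (∀ S : Finset (JVert m), IsCutset (JGraph m) ↑S → 4 ≤ S.card) ∧
    (∃ S : Finset (JVert m), IsCutset (JGraph m) ↑S ∧ S.card = 4) := by
  constructor
  · intro S hcut
    by_contra hlt
    push_neg at hlt
    have hcard : S.card ≤ 3 := by omega
    obtain ⟨x, hx, y, hy, hxy⟩ := hcut.1
    apply hcut.2
    haveI : Nonempty ((↑S : Set (JVert m))ᶜ : Set (JVert m)) := ⟨⟨x, hx⟩⟩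
    refine ⟨fun u v => ?_⟩
    obtain ⟨hu', hv', r⟩ := JTest.mainR hm S hcard u.val v.val
      (fun hc => u.property (Finset.mem_coe.mpr hc))
      (fun hc => v.property (Finset.mem_coe.mpr hc))
    exact r
  · refine ⟨{Ja ⟨0, by omega⟩, Ja ⟨2, by omega⟩, Jc ⟨0, by omega⟩, Jc ⟨1, by omega⟩},
      ⟨?_, ?_⟩, ?_⟩
    · refine ⟨Ja ⟨1, by omega⟩, ?_, Jb ⟨0, by omega⟩, ?_, by simp [Ja, Jb]⟩
      · simp [Ja, Jb, Jc]
      · simp [Ja, Jb, Jc]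
    · intro hconn
      have hx1 : (Ja ⟨1, by omega⟩ : JVert m) ∈
          (↑({Ja ⟨0, by omega⟩, Ja ⟨2, by omega⟩, Jc ⟨0, by omega⟩, Jc ⟨1, by omega⟩} :
            Finset (JVert m)) : Set (JVert m))ᶜ := by
        simp [Ja, Jb, Jc]
      have hy1 : (Jb ⟨0, by omega⟩ : JVert m) ∈
          (↑({Ja ⟨0, by omega⟩, Ja ⟨2, by omega⟩, Jc ⟨0, by omega⟩, Jc ⟨1, by omega⟩} :
            Finset (JVert m)) : Set (JVert m))ᶜ := by
        simp [Ja, Jb, Jc]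
      obtain ⟨w⟩ := hconn.preconnected ⟨Ja ⟨1, by omega⟩, hx1⟩ ⟨Jb ⟨0, by omega⟩, hy1⟩
      cases w with
      | cons hadj p =>
        rename_i v2
        have hadj' : (JGraph m).Adj (Ja ⟨1, by omega⟩) v2.val := by
          simpa [SimpleGraph.comap_adj] using hadj
        have hmem : v2.val ∈
            (({Ja ⟨0, by omega⟩, Ja ⟨2, by omega⟩, Jc ⟨0, by omega⟩, Jc ⟨1, by omega⟩} :
              Finset (JVert m)) : Set (JVert m)) := by
          rcases JTest.nbrJa1 hm v2.val hadj' with h | h | h | h <;> rw [h] <;> simp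
        exact v2.property hmem
    · rw [Finset.card_insert_of_notMem (by simp [Ja, Jc]),
          Finset.card_insert_of_notMem (by simp [Ja, Jc]),
          Finset.card_insert_of_notMem (by simp [Jc]), Finset.card_singleton]
end

section
/- For every odd integer m ≥ 3, the independence number of J_m equals m − 1: there is an independent set of size m − 1 in J_m, and every independent set in J_m has at most m − 1 vertices. -/
/-!
Give the slot `n < m - 1` of an independent set `I` the weight
`a_n + a_{n+1} + b_n + b_{n+1} + 2 c_n` (each letter standing for membership in `I`). The
triangles `c_n a_n a_{n+1}` and `c_n b_n b_{n+1}` bound it by `2`. Every `a_i` and `b_i` lies in two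
slots except the four end vertices, and the edges `a_1 b_1`, `a_m b_m` bound their contribution
by `2`; hence `2 |I| ≤ 2 (m - 1) + 2`. If `|I| = m`, all slots are tight and exactly one of
`a_1, b_1` is in `I`; tightness then rules out every `c_n` and makes `a` and `b` alternate along
the path, so, `m` being odd, `a_m = a_1` and `b_m = b_1`, which the cycle edges `a_m a_1`,
`b_m b_1` forbid.
-/

def indicatorSeq {V : Type*} [DecidableEq V] {k : ℕ} (s : Finset V) (f : Fin k → V) (n : ℕ) :
    ℕ :=
  if h : n < k then if f ⟨n, h⟩ ∈ s then 1 else 0 else 0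

theorem indicatorSeq_add_le_one {V : Type*} [DecidableEq V] {G : SimpleGraph V} {s : Finset V}
    (hs : IsIndepSet G ↑s) {k l : ℕ} {f : Fin k → V} {g : Fin l → V} {i j : ℕ}
    (hi : i < k) (hj : j < l) (hadj : G.Adj (f ⟨i, hi⟩) (g ⟨j, hj⟩)) :
    indicatorSeq s f i + indicatorSeq s g j ≤ 1 := by
  have : ¬ (f ⟨i, hi⟩ ∈ s ∧ g ⟨j, hj⟩ ∈ s) := fun ⟨hf, hg⟩ => hs hf hg hadj.ne hadj
  unfold indicatorSeq
  split_ifs <;> simp_all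

theorem sum_range_indicatorSeq {V : Type*} [DecidableEq V] {k : ℕ} (s : Finset V)
    (f : Fin k → V) :
    ∑ n ∈ Finset.range k, indicatorSeq s f n = ∑ i : Fin k, if f i ∈ s then 1 else 0 := by
  rw [← Fin.sum_univ_eq_sum_range]
  exact Finset.sum_congr rfl fun i _ => by simp [indicatorSeq]

theorem Finset.sum_range_adjacent_pairs {M : Type*} [AddCommMonoid M] (f : ℕ → M) (n : ℕ) :
    ∑ i ∈ range n, (f i + f (i + 1)) + (f 0 + f n) =
      ∑ i ∈ range (n + 1), f i + ∑ i ∈ range (n + 1), f i := by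
  nth_rw 1 [sum_range_succ f n, sum_range_succ' f n, sum_add_distrib]
  abel

/-- The edge constraints of `J m` on the membership indicators `α, β, γ` of the `a`-, `b`- and
`c`-vertices, indexed from `0`. -/
structure JIndepPattern (m : ℕ) (α β γ : ℕ → ℕ) : Prop where
  a_succ : ∀ n, n + 1 < m → α n + α (n + 1) ≤ 1
  b_succ : ∀ n, n + 1 < m → β n + β (n + 1) ≤ 1
  a_wrap : α (m - 1) + α 0 ≤ 1
  b_wrap : β (m - 1) + β 0 ≤ 1
  ab_zero : α 0 + β 0 ≤ 1
  ab_last : α (m - 1) + β (m - 1) ≤ 1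
  ca : ∀ n, n + 1 < m → γ n + α n ≤ 1
  ca_succ : ∀ n, n + 1 < m → γ n + α (n + 1) ≤ 1
  cb : ∀ n, n + 1 < m → γ n + β n ≤ 1
  cb_succ : ∀ n, n + 1 < m → γ n + β (n + 1) ≤ 1

namespace JIndepPattern

variable {m : ℕ} {α β γ : ℕ → ℕ}

theorem of_isIndepSet (hm : 2 ≤ m) {I : Finset (JVert m)} (hI : IsIndepSet (JGraph m) ↑I) :
    JIndepPattern m (indicatorSeq I Ja) (indicatorSeq I Jb) (indicatorSeq I Jc) where
  a_succ n hn :=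
    indicatorSeq_add_le_one hI (by omega) hn (by simp [JGraph, Ja, Nat.mod_eq_of_lt hn])
  b_succ n hn :=
    indicatorSeq_add_le_one hI (by omega) hn (by simp [JGraph, Jb, Nat.mod_eq_of_lt hn])
  a_wrap := indicatorSeq_add_le_one hI (by omega) (by omega) <| by
    simp [JGraph, Ja, Nat.sub_one_add_one (by omega : m ≠ 0)]
    omega
  b_wrap := indicatorSeq_add_le_one hI (by omega) (by omega) <| by
    simp [JGraph, Jb, Nat.sub_one_add_one (by omega : m ≠ 0)]
    omega
  ab_zero := indicatorSeq_add_le_one hI (by omega) (by omega) (by simp [JGraph, Ja, Jb])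
  ab_last := indicatorSeq_add_le_one hI (by omega) (by omega) (by simp [JGraph, Ja, Jb])
  ca n hn := indicatorSeq_add_le_one hI (by omega) (by omega) (by simp [JGraph, Ja, Jc])
  ca_succ n hn := indicatorSeq_add_le_one hI (by omega) hn (by simp [JGraph, Ja, Jc])
  cb n hn := indicatorSeq_add_le_one hI (by omega) (by omega) (by simp [JGraph, Jb, Jc])
  cb_succ n hn := indicatorSeq_add_le_one hI (by omega) hn (by simp [JGraph, Jb, Jc])

variable (h : JIndepPattern m α β γ)
include h

theorem slot_le {n : ℕ} (hn : n + 1 < m) :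
    α n + α (n + 1) + β n + β (n + 1) + 2 * γ n ≤ 2 := by
  have := h.a_succ n hn; have := h.b_succ n hn
  have := h.ca n hn; have := h.ca_succ n hn; have := h.cb n hn; have := h.cb_succ n hn
  omega

theorem alternating_of_tight
    (htight : ∀ n, n + 1 < m → α n + α (n + 1) + β n + β (n + 1) + 2 * γ n = 2)
    (h0 : α 0 + β 0 = 1) : ∀ n < m, α n + β n = 1 ∧ α n = (α 0 + n) % 2 := by
  intro n
  induction n with
  | zero => intro; omega
  | succ n ih =>
    intro hn
    have := ih (by omega)
    have := htight n hn; have := h.a_succ n hn; have := h.b_succ n hn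
    have := h.ca n hn; have := h.cb n hn
    omega

theorem sum_le (hodd : Odd m) :
    ∑ n ∈ Finset.range m, α n + ∑ n ∈ Finset.range m, β n + ∑ n ∈ Finset.range (m - 1), γ n
      ≤ m - 1 := by
  obtain ⟨t, rfl⟩ := hodd
  have hab0 := h.ab_zero
  have habl := h.ab_last
  have haw := h.a_wrap
  have hbw := h.b_wrap
  simp only [add_tsub_cancel_right] at habl haw hbw ⊢
  set slot := fun n => α n + α (n + 1) + β n + β (n + 1) + 2 * γ n with hslot
  have hdouble : ∑ n ∈ Finset.range (2 * t), slot n + (α 0 + β 0) + (α (2 * t) + β (2 * t)) =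
      2 * (∑ n ∈ Finset.range (2 * t + 1), α n + ∑ n ∈ Finset.range (2 * t + 1), β n
        + ∑ n ∈ Finset.range (2 * t), γ n) := by
    have ha := Finset.sum_range_adjacent_pairs α (2 * t)
    have hb := Finset.sum_range_adjacent_pairs β (2 * t)
    simp only [hslot, Finset.sum_add_distrib, ← Finset.mul_sum] at ha hb ⊢
    omega
  have hslot_le : ∀ n ∈ Finset.range (2 * t), slot n ≤ 2 := fun n hn =>
    h.slot_le (by have := Finset.mem_range.mp hn; omega)
  have hsum_le : ∑ n ∈ Finset.range (2 * t), slot n ≤ ∑ _n ∈ Finset.range (2 * t), 2 :=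
    Finset.sum_le_sum hslot_le
  simp only [Finset.sum_const, Finset.card_range, smul_eq_mul] at hsum_le
  by_contra! hgt
  have htight : ∀ n ∈ Finset.range (2 * t), slot n = 2 :=
    (Finset.sum_eq_sum_iff_of_le hslot_le).mp <| by
      simp only [Finset.sum_const, Finset.card_range, smul_eq_mul]
      omega
  have halt := h.alternating_of_tight (fun n hn => htight n (Finset.mem_range.mpr (by omega)))
    (by omega) (2 * t) (by omega)
  omega

end JIndepPattern

theorem card_eq_sum_indicatorSeq {m : ℕ} (I : Finset (JVert m)) :
    I.card = ∑ n ∈ Finset.range m, indicatorSeq I Ja n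
      + ∑ n ∈ Finset.range m, indicatorSeq I Jb n
      + ∑ n ∈ Finset.range (m - 1), indicatorSeq I Jc n := by
  have hcard : I.card = ∑ v : JVert m, if v ∈ I then 1 else 0 := by simp
  rw [hcard, Fintype.sum_sum_type, Fintype.sum_sum_type, sum_range_indicatorSeq,
    sum_range_indicatorSeq, sum_range_indicatorSeq, add_assoc]
  rfl

theorem Jc_injective (m : ℕ) : Function.Injective (Jc (m := m)) :=
  Sum.inr_injective.comp Sum.inr_injective

theorem isIndepSet_image_Jc (m : ℕ) :
    IsIndepSet (JGraph m) ↑(Finset.univ.image (Jc (m := m))) := by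
  simp only [Finset.coe_image, Finset.coe_univ, Set.image_univ]
  rintro _ ⟨i, rfl⟩ _ ⟨j, rfl⟩ - hadj
  simp [JGraph, Jc] at hadj

theorem card_image_Jc (m : ℕ) : (Finset.univ.image (Jc (m := m))).card = m - 1 := by
  rw [Finset.card_image_of_injective _ (Jc_injective m), Finset.card_univ, Fintype.card_fin]

/-- For every odd `m ≥ 3`, the independence number of `J_m` equals `m - 1`. -/
theorem stmt_4 (m : ℕ) (hm : 3 ≤ m) (hodd : Odd m) :
    (∃ I : Finset (JVert m), IsIndepSet (JGraph m) ↑I ∧ I.card = m - 1) ∧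
    (∀ I : Finset (JVert m), IsIndepSet (JGraph m) ↑I → I.card ≤ m - 1) := by
  refine ⟨⟨_, isIndepSet_image_Jc m, card_image_Jc m⟩, fun I hI => ?_⟩
  rw [card_eq_sum_indicatorSeq]
  exact (JIndepPattern.of_isIndepSet (by omega) hI).sum_le hodd
end

section
/- For every integer m ≥ 5, every claw in J_m is centered at one of the four vertices a_1, a_m, b_1, b_m: if a vertex v of J_m has three pairwise nonadjacent neighbors, then v ∈ {a_1, a_m, b_1, b_m}. -/
lemma pair_trick {V : Type*} (G : SimpleGraph V) (x y z p1 p2 q1 q2 : V)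
    (hxy : x ≠ y) (hxz : x ≠ z) (hyz : y ≠ z)
    (hxy' : ¬ G.Adj x y) (hxz' : ¬ G.Adj x z) (hyz' : ¬ G.Adj y z)
    (hA : G.Adj p1 p2) (hB : G.Adj q1 q2)
    (hx : x = p1 ∨ x = p2 ∨ x = q1 ∨ x = q2)
    (hy : y = p1 ∨ y = p2 ∨ y = q1 ∨ y = q2)
    (hz : z = p1 ∨ z = p2 ∨ z = q1 ∨ z = q2) : False := by
  have hA' := hA.symm
  have hB' := hB.symm
  rcases hx with rfl | rfl | rfl | rfl <;> rcases hy with rfl | rfl | rfl | rfl <;>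
    rcases hz with rfl | rfl | rfl | rfl <;> tauto

/-- For `m ≥ 5`, every claw of `J_m` is centered at one of `a_1, a_m, b_1, b_m`. -/
theorem stmt_9 (m : ℕ) (hm : 5 ≤ m) (v x y z : JVert m)
    (hvx : (JGraph m).Adj v x) (hvy : (JGraph m).Adj v y) (hvz : (JGraph m).Adj v z)
    (hxy : x ≠ y) (hxz : x ≠ z) (hyz : y ≠ z)
    (hxy' : ¬ (JGraph m).Adj x y) (hxz' : ¬ (JGraph m).Adj x z)
    (hyz' : ¬ (JGraph m).Adj y z) :
    v = Ja ⟨0, by omega⟩ ∨ v = Ja ⟨m - 1, by omega⟩ ∨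
      v = Jb ⟨0, by omega⟩ ∨ v = Jb ⟨m - 1, by omega⟩ := by
  by_contra hcon
  push_neg at hcon
  obtain ⟨h1, h2, h3, h4⟩ := hcon
  obtain (i | i | i) := v
  · -- v = Ja i
    have hi0 : (i : ℕ) ≠ 0 := fun h => h1 (congrArg Sum.inl (Fin.ext h))
    have him : (i : ℕ) ≠ m - 1 := fun h => h2 (congrArg Sum.inl (Fin.ext h))
    have hilt := i.isLt
    have key : ∀ w, (JGraph m).Adj (Sum.inl i) w →
        w = Ja ⟨(i : ℕ) - 1, by omega⟩ ∨ w = Jc ⟨(i : ℕ) - 1, by omega⟩ ∨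
        w = Ja ⟨(i : ℕ) + 1, by omega⟩ ∨ w = Jc ⟨(i : ℕ), by omega⟩ := by
      rintro (j | j | j) hw
      · simp [JGraph, Ja, Jc, SimpleGraph.fromRel_adj, Fin.ext_iff, Sum.inl.injEq,
          ne_eq, Fin.ext_iff] at hw ⊢
        have e1 : ((i : ℕ) + 1) % m = (i : ℕ) + 1 := Nat.mod_eq_of_lt (by omega)
        have e2 : ((j : ℕ) + 1) % m = (j : ℕ) + 1 ∨ ((j : ℕ) + 1) % m = 0 := by
          rcases Nat.lt_or_ge ((j : ℕ) + 1) m with h | h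
          · exact Or.inl (Nat.mod_eq_of_lt h)
          · have hj := j.isLt
            have : (j : ℕ) + 1 = m := by omega
            exact Or.inr (by rw [this, Nat.mod_self])
        omega
      · exfalso
        simp [JGraph, SimpleGraph.fromRel_adj] at hw
        omega
      · simp [JGraph, Ja, Jc, SimpleGraph.fromRel_adj, Sum.inr.injEq, Sum.inr.injEq,
          Fin.ext_iff] at hw ⊢
        omega
    have hA : (JGraph m).Adj (Ja ⟨(i : ℕ) - 1, by omega⟩) (Jc ⟨(i : ℕ) - 1, by omega⟩) := by
      simp [JGraph, Ja, Jc, SimpleGraph.fromRel_adj]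
    have hB : (JGraph m).Adj (Ja ⟨(i : ℕ) + 1, by omega⟩) (Jc ⟨(i : ℕ), by omega⟩) := by
      simp [JGraph, Ja, Jc, SimpleGraph.fromRel_adj]
    exact pair_trick (JGraph m) x y z _ _ _ _ hxy hxz hyz hxy' hxz' hyz' hA hB
      (key x hvx) (key y hvy) (key z hvz)
  · -- v = Jb i
    have hi0 : (i : ℕ) ≠ 0 := fun h => h3 (congrArg (Sum.inr ∘ Sum.inl) (Fin.ext h))
    have him : (i : ℕ) ≠ m - 1 := fun h => h4 (congrArg (Sum.inr ∘ Sum.inl) (Fin.ext h))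
    have hilt := i.isLt
    have key : ∀ w, (JGraph m).Adj (Sum.inr (Sum.inl i)) w →
        w = Jb ⟨(i : ℕ) - 1, by omega⟩ ∨ w = Jc ⟨(i : ℕ) - 1, by omega⟩ ∨
        w = Jb ⟨(i : ℕ) + 1, by omega⟩ ∨ w = Jc ⟨(i : ℕ), by omega⟩ := by
      rintro (j | j | j) hw
      · exfalso
        simp [JGraph, SimpleGraph.fromRel_adj] at hw
        omega
      · simp [JGraph, Jb, Jc, SimpleGraph.fromRel_adj, Sum.inr.injEq, Sum.inl.injEq,
          ne_eq, Fin.ext_iff] at hw ⊢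
        have e1 : ((i : ℕ) + 1) % m = (i : ℕ) + 1 := Nat.mod_eq_of_lt (by omega)
        have e2 : ((j : ℕ) + 1) % m = (j : ℕ) + 1 ∨ ((j : ℕ) + 1) % m = 0 := by
          rcases Nat.lt_or_ge ((j : ℕ) + 1) m with h | h
          · exact Or.inl (Nat.mod_eq_of_lt h)
          · have hj := j.isLt
            have : (j : ℕ) + 1 = m := by omega
            exact Or.inr (by rw [this, Nat.mod_self])
        omega
      · simp [JGraph, Jb, Jc, SimpleGraph.fromRel_adj, Sum.inr.injEq,
          Fin.ext_iff] at hw ⊢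
        omega
    have hA : (JGraph m).Adj (Jb ⟨(i : ℕ) - 1, by omega⟩) (Jc ⟨(i : ℕ) - 1, by omega⟩) := by
      simp [JGraph, Jb, Jc, SimpleGraph.fromRel_adj]
    have hB : (JGraph m).Adj (Jb ⟨(i : ℕ) + 1, by omega⟩) (Jc ⟨(i : ℕ), by omega⟩) := by
      simp [JGraph, Jb, Jc, SimpleGraph.fromRel_adj]
    exact pair_trick (JGraph m) x y z _ _ _ _ hxy hxz hyz hxy' hxz' hyz' hA hB
      (key x hvx) (key y hvy) (key z hvz)
  · -- v = Jc i
    have hilt := i.isLt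
    have key : ∀ w, (JGraph m).Adj (Sum.inr (Sum.inr i)) w →
        w = Ja ⟨(i : ℕ), by omega⟩ ∨ w = Ja ⟨(i : ℕ) + 1, by omega⟩ ∨
        w = Jb ⟨(i : ℕ), by omega⟩ ∨ w = Jb ⟨(i : ℕ) + 1, by omega⟩ := by
      rintro (j | j | j) hw
      · simp [JGraph, Ja, Jb, SimpleGraph.fromRel_adj, Sum.inl.injEq,
          Fin.ext_iff] at hw ⊢
        omega
      · simp [JGraph, Ja, Jb, SimpleGraph.fromRel_adj, Sum.inr.injEq, Sum.inl.injEq,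
          Fin.ext_iff] at hw ⊢
        omega
      · exfalso
        simp [JGraph, SimpleGraph.fromRel_adj] at hw
    have e1 : ((i : ℕ) + 1) % m = (i : ℕ) + 1 := Nat.mod_eq_of_lt (by omega)
    have hA : (JGraph m).Adj (Ja ⟨(i : ℕ), by omega⟩) (Ja ⟨(i : ℕ) + 1, by omega⟩) := by
      simp [JGraph, Ja, SimpleGraph.fromRel_adj, Fin.ext_iff, e1]
    have hB : (JGraph m).Adj (Jb ⟨(i : ℕ), by omega⟩) (Jb ⟨(i : ℕ) + 1, by omega⟩) := by
      simp [JGraph, Jb, SimpleGraph.fromRel_adj, Fin.ext_iff, e1]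
    exact pair_trick (JGraph m) x y z _ _ _ _ hxy hxz hyz hxy' hxz' hyz' hA hB
      (key x hvx) (key y hvy) (key z hvz)
end

section
/- For every integer m ≥ 3, no vertex of J_m is the center of an induced K_{1,4}: no vertex of J_m has four pairwise nonadjacent neighbors. -/
lemma succMod {m x : ℕ} (hx : x < m) : (x+1) % m = x + 1 ∨ ((x+1) % m = 0 ∧ x + 1 = m) := by
  rcases Nat.lt_or_ge (x+1) m with h|h
  · exact Or.inl (Nat.mod_eq_of_lt h)
  · right; have hxm : x+1 = m := by omega
    simp [hxm]

lemma exists_cover (m : ℕ) (hm : 3 ≤ m) (v : JVert m) :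
    ∃ p q r s : JVert m, (JGraph m).Adj p q ∧
      ∀ u, (JGraph m).Adj v u → u = p ∨ u = q ∨ u = r ∨ u = s := by
  have hadj : ∀ p q, (JGraph m).Adj p q ↔ p ≠ q ∧
      ((match p, q with
        | Sum.inl i, Sum.inl j => (j : ℕ) = ((i : ℕ) + 1) % m
        | Sum.inr (Sum.inl i), Sum.inr (Sum.inl j) => (j : ℕ) = ((i : ℕ) + 1) % m
        | Sum.inr (Sum.inr i), Sum.inl j => (j : ℕ) = (i : ℕ) ∨ (j : ℕ) = (i : ℕ) + 1
        | Sum.inr (Sum.inr i), Sum.inr (Sum.inl j) => (j : ℕ) = (i : ℕ) ∨ (j : ℕ) = (i : ℕ) + 1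
        | Sum.inl i, Sum.inr (Sum.inl j) =>
            ((i : ℕ) = 0 ∧ (j : ℕ) = 0) ∨ ((i : ℕ) = m - 1 ∧ (j : ℕ) = m - 1)
        | _, _ => False) ∨
       (match q, p with
        | Sum.inl i, Sum.inl j => (j : ℕ) = ((i : ℕ) + 1) % m
        | Sum.inr (Sum.inl i), Sum.inr (Sum.inl j) => (j : ℕ) = ((i : ℕ) + 1) % m
        | Sum.inr (Sum.inr i), Sum.inl j => (j : ℕ) = (i : ℕ) ∨ (j : ℕ) = (i : ℕ) + 1
        | Sum.inr (Sum.inr i), Sum.inr (Sum.inl j) => (j : ℕ) = (i : ℕ) ∨ (j : ℕ) = (i : ℕ) + 1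
        | Sum.inl i, Sum.inr (Sum.inl j) =>
            ((i : ℕ) = 0 ∧ (j : ℕ) = 0) ∨ ((i : ℕ) = m - 1 ∧ (j : ℕ) = m - 1)
        | _, _ => False)) := by
    intro p q; rw [JGraph, SimpleGraph.fromRel_adj]
  rcases v with i | i | i
  · -- v = a_i
    have hi := i.isLt
    by_cases h0 : (i : ℕ) = 0
    · refine ⟨Jc ⟨0, by omega⟩, Ja ⟨1, by omega⟩, Ja ⟨m-1, by omega⟩, Jb ⟨0, by omega⟩,
        by rw [hadj]; exact ⟨by simp [Jc, Ja], Or.inl (by simp [Jc, Ja])⟩, ?_⟩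
      intro u hu
      obtain ⟨hne, h⟩ := (hadj _ u).1 hu
      rcases u with j | j | j <;>
        simp only [Ja, Jb, Jc, Sum.inl.injEq, Sum.inr.injEq, Fin.ext_iff, reduceCtorEq,
          false_or, or_false] at h ⊢
      · rcases succMod i.isLt with h1 | h1 <;> rcases succMod j.isLt with h2 | h2 <;> omega
      · omega
      · omega
    · by_cases h1 : (i : ℕ) = m - 1
      · refine ⟨Jc ⟨m-2, by omega⟩, Ja ⟨m-2, by omega⟩, Ja ⟨0, by omega⟩, Jb ⟨m-1, by omega⟩,
          by rw [hadj]; exact ⟨by simp [Jc, Ja],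
            Or.inl (by simp [Jc, Ja])⟩, ?_⟩
        intro u hu
        obtain ⟨hne, h⟩ := (hadj _ u).1 hu
        rcases u with j | j | j <;>
          simp only [Ja, Jb, Jc, Sum.inl.injEq, Sum.inr.injEq, Fin.ext_iff, reduceCtorEq,
            false_or, or_false] at h ⊢
        · rcases succMod i.isLt with h2 | h2 <;> rcases succMod j.isLt with h3 | h3 <;> omega
        · omega
        · have := j.isLt; omega
      · refine ⟨Jc ⟨i, by omega⟩, Ja ⟨(i:ℕ)+1, by omega⟩, Ja ⟨(i:ℕ)-1, by omega⟩,
          Jc ⟨(i:ℕ)-1, by omega⟩,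
          by rw [hadj]; exact ⟨by simp [Jc, Ja], Or.inl (by simp [Jc, Ja])⟩, ?_⟩
        intro u hu
        obtain ⟨hne, h⟩ := (hadj _ u).1 hu
        rcases u with j | j | j <;>
          simp only [Ja, Jb, Jc, Sum.inl.injEq, Sum.inr.injEq, Fin.ext_iff, reduceCtorEq,
            false_or, or_false] at h ⊢
        · rcases succMod i.isLt with h2 | h2 <;> rcases succMod j.isLt with h3 | h3 <;> omega
        · omega
        · omega
  · -- v = b_i
    have hi := i.isLt
    by_cases h0 : (i : ℕ) = 0
    · refine ⟨Jc ⟨0, by omega⟩, Jb ⟨1, by omega⟩, Jb ⟨m-1, by omega⟩, Ja ⟨0, by omega⟩,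
        by rw [hadj]; exact ⟨by simp [Jc, Jb], Or.inl (by simp [Jc, Jb])⟩, ?_⟩
      intro u hu
      obtain ⟨hne, h⟩ := (hadj _ u).1 hu
      rcases u with j | j | j <;>
        simp only [Ja, Jb, Jc, Sum.inl.injEq, Sum.inr.injEq, Fin.ext_iff, reduceCtorEq,
          false_or, or_false] at h ⊢
      · omega
      · rcases succMod i.isLt with h1 | h1 <;> rcases succMod j.isLt with h2 | h2 <;> omega
      · omega
    · by_cases h1 : (i : ℕ) = m - 1
      · refine ⟨Jc ⟨m-2, by omega⟩, Jb ⟨m-2, by omega⟩, Jb ⟨0, by omega⟩, Ja ⟨m-1, by omega⟩,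
          by rw [hadj]; exact ⟨by simp [Jc, Jb],
            Or.inl (by simp [Jc, Jb])⟩, ?_⟩
        intro u hu
        obtain ⟨hne, h⟩ := (hadj _ u).1 hu
        rcases u with j | j | j <;>
          simp only [Ja, Jb, Jc, Sum.inl.injEq, Sum.inr.injEq, Fin.ext_iff, reduceCtorEq,
            false_or, or_false] at h ⊢
        · omega
        · rcases succMod i.isLt with h2 | h2 <;> rcases succMod j.isLt with h3 | h3 <;> omega
        · have := j.isLt; omega
      · refine ⟨Jc ⟨i, by omega⟩, Jb ⟨(i:ℕ)+1, by omega⟩, Jb ⟨(i:ℕ)-1, by omega⟩,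
          Jc ⟨(i:ℕ)-1, by omega⟩,
          by rw [hadj]; exact ⟨by simp [Jc, Jb], Or.inl (by simp [Jc, Jb])⟩, ?_⟩
        intro u hu
        obtain ⟨hne, h⟩ := (hadj _ u).1 hu
        rcases u with j | j | j <;>
          simp only [Ja, Jb, Jc, Sum.inl.injEq, Sum.inr.injEq, Fin.ext_iff, reduceCtorEq,
            false_or, or_false] at h ⊢
        · omega
        · rcases succMod i.isLt with h2 | h2 <;> rcases succMod j.isLt with h3 | h3 <;> omega
        · omega
  · -- v = c_i
    have hi := i.isLt
    refine ⟨Ja ⟨i, by omega⟩, Ja ⟨(i:ℕ)+1, by omega⟩, Jb ⟨i, by omega⟩, Jb ⟨(i:ℕ)+1, by omega⟩,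
      by rw [hadj]; exact ⟨by simp [Ja, Fin.ext_iff],
        Or.inl (by simp [Ja]; exact (Nat.mod_eq_of_lt (by omega)).symm)⟩, ?_⟩
    intro u hu
    obtain ⟨hne, h⟩ := (hadj _ u).1 hu
    rcases u with j | j | j <;>
      simp only [Ja, Jb, Jc, Sum.inl.injEq, Sum.inr.injEq, Fin.ext_iff, reduceCtorEq,
        false_or, or_false] at h ⊢ <;> omega

lemma keyLemma {α : Type*} {Q : α → α → Prop} {p q r s w x y z : α}
    (hQ : Q p q) (hQ' : Q q p)
    (hw : w = p ∨ w = q ∨ w = r ∨ w = s) (hx : x = p ∨ x = q ∨ x = r ∨ x = s)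
    (hy : y = p ∨ y = q ∨ y = r ∨ y = s) (hz : z = p ∨ z = q ∨ z = r ∨ z = s)
    (hwx : w ≠ x) (hwy : w ≠ y) (hwz : w ≠ z) (hxy : x ≠ y) (hxz : x ≠ z) (hyz : y ≠ z)
    (nwx : ¬Q w x) (nwy : ¬Q w y) (nwz : ¬Q w z)
    (nxy : ¬Q x y) (nxz : ¬Q x z) (nyz : ¬Q y z) : False := by
  rcases hw with rfl | rfl | rfl | rfl <;> rcases hx with rfl | rfl | rfl | rfl <;>
    rcases hy with rfl | rfl | rfl | rfl <;> rcases hz with rfl | rfl | rfl | rfl <;>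
      simp_all


/-- For every `m ≥ 3`, no vertex of `J_m` has four pairwise nonadjacent
neighbors, i.e. no vertex is the center of an induced `K_{1,4}`. -/
theorem stmt_10 (m : ℕ) (hm : 3 ≤ m) :
    ¬ ∃ (v w x y z : JVert m),
      (JGraph m).Adj v w ∧ (JGraph m).Adj v x ∧ (JGraph m).Adj v y ∧ (JGraph m).Adj v z ∧
      w ≠ x ∧ w ≠ y ∧ w ≠ z ∧ x ≠ y ∧ x ≠ z ∧ y ≠ z ∧
      ¬ (JGraph m).Adj w x ∧ ¬ (JGraph m).Adj w y ∧ ¬ (JGraph m).Adj w z ∧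
      ¬ (JGraph m).Adj x y ∧ ¬ (JGraph m).Adj x z ∧ ¬ (JGraph m).Adj y z := by
  rintro ⟨v, w, x, y, z, hw, hx, hy, hz, hwx, hwy, hwz, hxy, hxz, hyz,
    nwx, nwy, nwz, nxy, nxz, nyz⟩
  obtain ⟨p, q, r, s, hpq, hcov⟩ := exists_cover m hm v
  exact keyLemma hpq hpq.symm (hcov w hw) (hcov x hx) (hcov y hy) (hcov z hz)
    hwx hwy hwz hxy hxz hyz nwx nwy nwz nxy nxz nyz
end

section
/- Let r ≥ 1 and let G be an r-regular graph on n vertices that is supertough, i.e., for every cut-set S of G one has r·k(G − S) ≤ 2·|S|. Then the independence number of G is at most 2n/(r+2): every independent set of G has size at most 2n/(r+2). -/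
lemma card_cc_bot {α : Type*} (H : SimpleGraph α) (h : ∀ a b, ¬ H.Adj a b) :
    Nat.card H.ConnectedComponent = Nat.card α := by
  have hb : H = ⊥ := by ext a b; simp [h a b]
  subst hb
  refine (Nat.card_eq_of_bijective (SimpleGraph.connectedComponentMk _) ⟨?_, ?_⟩).symm
  · intro a b hab
    exact SimpleGraph.reachable_bot.mp (SimpleGraph.ConnectedComponent.eq.mp hab)
  · exact Quot.exists_rep


/-- An `r`-regular supertough graph on `n` vertices has independence number
at most `2n/(r+2)`. -/
theorem stmt_13 {V : Type*} [Fintype V] [DecidableEq V]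
    (G : SimpleGraph V) [DecidableRel G.Adj] (r : ℕ) (hr : 1 ≤ r)
    (hreg : ∀ v : V, G.degree v = r)
    (htough : ∀ S : Finset V, IsCutset G ↑S →
      r * Nat.card (G.induce (↑S : Set V)ᶜ).ConnectedComponent ≤ 2 * S.card)
    (I : Finset V) (hI : IsIndepSet G ↑I) :
    (r + 2) * I.card ≤ 2 * Fintype.card V := by
  
  classical
  rcases Nat.lt_or_ge I.card 2 with h2 | h2
  · -- small cases
    rcases Nat.eq_zero_or_pos I.card with h0 | h1
    · simp [h0]
    · obtain ⟨v, hv⟩ := Finset.card_pos.mp h1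
      have hlt : r < Fintype.card V := by
        rw [← hreg v]; exact G.degree_lt_card_verts v
      have hI1 : I.card = 1 := by omega
      rw [hI1]
      omega
  · -- main case
    obtain ⟨u, hu, v, hv, huv⟩ := Finset.one_lt_card.mp h2
    have hset : ((↑(Iᶜ) : Set V))ᶜ = (↑I : Set V) := by
      rw [Finset.coe_compl, compl_compl]
    have hnoadj : ∀ a b : (↑I : Set V), ¬ (G.induce (↑I : Set V)).Adj a b := by
      rintro ⟨a, ha⟩ ⟨b, hb⟩ hab
      simp only [SimpleGraph.comap_adj, Function.Embedding.coe_subtype,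
        SimpleGraph.induce_eq_coe_induce_top] at hab
      have hadj : G.Adj a b := hab.2.2
      exact hI ha hb (G.ne_of_adj hadj) hadj
    have hcut : IsCutset G (↑(Iᶜ) : Set V) := by
      constructor
      · rw [hset]
        exact ⟨u, hu, v, hv, huv⟩
      · rw [hset]
        intro hc
        have := hc.preconnected ⟨u, hu⟩ ⟨v, hv⟩
        have heq : (⟨u, hu⟩ : (↑I : Set V)) = ⟨v, hv⟩ := by
          have hb : G.induce (↑I : Set V) = ⊥ := by
            ext a b; simp only [SimpleGraph.bot_adj, iff_false]; exact hnoadj a b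
          rw [hb] at this
          exact SimpleGraph.reachable_bot.mp this
        exact huv (congrArg Subtype.val heq)
    have := htough Iᶜ hcut
    rw [hset] at this
    rw [card_cc_bot _ hnoadj] at this
    have hcard : Nat.card (↑I : Set V) = I.card := by
      simp [Nat.card_eq_fintype_card]
    rw [hcard, Finset.card_compl] at this
    have hle : I.card ≤ Fintype.card V := Finset.card_le_card (Finset.subset_univ I)
    have hmul : (r + 2) * I.card = r * I.card + 2 * I.card := by ring
    omega
end
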